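/- Let G act on a finite set X, with B = (α₁,…,αₙ) a partial base and S a partial strong generating set for G. With Gⁱ = G_{α₁,…,α_i}, Sⁱ = S ∩ Gⁱ, Hⁱ = ⟨Sⁱ⟩, G⁰ = H⁰ = G: the condition Gⁱ = Hⁱ for all i = 0,…,n holds if and only if (Hⁱ)_{α_{i+1}} = H^{i+1} for all i = 0,…,n−1. -/

import Mathlib

/-! The chain `Gⁱ` satisfies `G⁰ = ⊤ = H⁰` and `G^{i+1} = Gⁱ ⊓ G_{α_{i+1}}`. So `Gⁱ = Hⁱ` for all
`i ≤ n` is equivalent, by induction on `i`, to `Hⁱ` obeying the same recursion as `Gⁱ`,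
which is `(Hⁱ)_{α_{i+1}} = H^{i+1}`. -/

theorem forall_le_eq_iff_forall_lt_inf_eq {α : Type*} [Min α] {g h k : ℕ → α}
    (h_zero : g 0 = h 0) (g_succ : ∀ i, g (i + 1) = g i ⊓ k i) (n : ℕ) :
    (∀ i ≤ n, g i = h i) ↔ ∀ i < n, h i ⊓ k i = h (i + 1) := by
  constructor
  · intro hgh i hi
    rw [← hgh i hi.le, ← hgh (i + 1) hi, g_succ]
  · intro hrec i hi
    induction i with
    | zero => exact h_zero
    | succ i ih => rw [g_succ, ih (by omega), hrec i hi]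

theorem Finset.iInf_range_succ {α : Type*} [CompleteLattice α] (f : ℕ → α) (i : ℕ) :
    ⨅ j ∈ Finset.range (i + 1), f j = (⨅ j ∈ Finset.range i, f j) ⊓ f i := by
  rw [Finset.range_add_one, Finset.iInf_insert, inf_comm]

theorem leon_two_iff_three_general {G X : Type*} [Group G]
    [MulAction G X] (n : ℕ) (α : ℕ → X) (S : Set G)
    (hS : Subgroup.closure S = ⊤) :
    let Gi : ℕ → Subgroup G := fun i => ⨅ j ∈ Finset.range i, MulAction.stabilizer G (α j)
    let Hi : ℕ → Subgroup G := fun i => Subgroup.closure (S ∩ (Gi i : Set G))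
    (∀ i ≤ n, Gi i = Hi i) ↔
      (∀ i < n, Hi i ⊓ MulAction.stabilizer G (α i) = Hi (i + 1)) := by
  intro Gi Hi
  have G_zero : Gi 0 = ⊤ := by simp [Gi]
  have H_zero : Hi 0 = ⊤ := by simp [Hi, G_zero, hS]
  exact forall_le_eq_iff_forall_lt_inf_eq (G_zero.trans H_zero.symm)
    (fun i => Finset.iInf_range_succ _ i) n

/-- Leon's theorem, (2) ↔ (3): `Gⁱ = Hⁱ` for all `i` iff
`(Hⁱ)_{α_{i+1}} = H^{i+1}` for all `i`. -/
theorem leon_two_iff_three {G X : Type*} [Group G] [Finite G] [Finite X]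
    [MulAction G X] (n : ℕ) (α : ℕ → X) (S : Set G)
    (hS : Subgroup.closure S = ⊤)
    (hB : ∀ s ∈ S, ∃ i < n, s • α i ≠ α i) :
    let Gi : ℕ → Subgroup G := fun i => ⨅ j ∈ Finset.range i, MulAction.stabilizer G (α j)
    let Hi : ℕ → Subgroup G := fun i => Subgroup.closure (S ∩ (Gi i : Set G))
    (∀ i ≤ n, Gi i = Hi i) ↔
      (∀ i < n, Hi i ⊓ MulAction.stabilizer G (α i) = Hi (i + 1)) :=
  leon_two_iff_three_general n α S hS
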